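/- For nonnegative integers n, m, ℓ with ℓ ≤ n, the q-Chu–Vandermonde identity holds: qbinom(n+m, m)_q = Σ_{k=0}^{n-ℓ} qbinom(n-ℓ, k)_q · qbinom(m+ℓ, m-k)_q · q^{k(k+ℓ)}. -/

import Mathlib

open Finset Polynomial

/-- The Gaussian binomial coefficient, as a polynomial expression in `q`
(equal to `0` when the lower index exceeds the upper one). -/
def qbin {R : Type*} [CommRing R] (q : R) : ℕ → ℕ → R
  | 0, 0 => 1
  | 0, _ + 1 => 0
  | _ + 1, 0 => 1
  | n + 1, k + 1 => qbin q n k + q ^ (k + 1) * qbin q n (k + 1)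

/-!
Write `n + m = A + (m + ℓ)` with `A = n - ℓ` and induct on `A`. Besides the defining recursion,
which splits off the last element, one needs the dual q-Pascal rule
`qbin (n+1) (k+1) = q ^ (n-k) * qbin n k + qbin n (k+1)`, which splits off the first one.
Applying it to both `qbin (A+1+(m+1+ℓ)) (m+1)` and `qbin (A+1) (k+1)` turns the identity for `A+1`
into the identities for `A` with parameters `(m, ℓ+1)` and `(m+1, ℓ)`.
-/

section

variable {R : Type*} [CommRing R] (q : R)

theorem qbin_zero_right (n : ℕ) : qbin q n 0 = 1 := by
  cases n <;> rfl

theorem qbin_succ_succ (n k : ℕ) :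
    qbin q (n + 1) (k + 1) = qbin q n k + q ^ (k + 1) * qbin q n (k + 1) := rfl

theorem qbin_eq_zero_of_lt : ∀ {n k : ℕ}, n < k → qbin q n k = 0
  | 0, _ + 1, _ => rfl
  | _ + 1, _ + 1, h => by
    rw [qbin_succ_succ, qbin_eq_zero_of_lt (by omega), qbin_eq_zero_of_lt (by omega)]
    ring

theorem qbin_self : ∀ n : ℕ, qbin q n n = 1
  | 0 => rfl
  | n + 1 => by rw [qbin_succ_succ, qbin_self n, qbin_eq_zero_of_lt q (by omega)]; ring

theorem qbin_add_succ_succ' : ∀ n k : ℕ,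
    qbin q (n + k + 1) (k + 1) = q ^ n * qbin q (n + k) k + qbin q (n + k) (k + 1)
  | 0, k => by
    rw [Nat.zero_add, qbin_self, qbin_self, qbin_eq_zero_of_lt q (by omega)]
    ring
  | n + 1, 0 => by
    have ih := qbin_add_succ_succ' n 0
    simp only [Nat.add_zero, qbin_zero_right, mul_one] at ih ⊢
    rw [qbin_succ_succ q (n + 1) 0, qbin_zero_right]
    linear_combination q * ih - qbin_succ_succ q n 0 - qbin_zero_right q n
  | n + 1, k + 1 => by
    have ih₁ : qbin q (n + k + 1 + 1) (k + 1) =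
        q ^ (n + 1) * qbin q (n + k + 1) k + qbin q (n + k + 1) (k + 1) := by
      have := qbin_add_succ_succ' (n + 1) k
      rwa [show n + 1 + k = n + k + 1 by omega] at this
    have ih₂ : qbin q (n + k + 1 + 1) (k + 1 + 1) =
        q ^ n * qbin q (n + k + 1) (k + 1) + qbin q (n + k + 1) (k + 1 + 1) :=
      qbin_add_succ_succ' n (k + 1)
    rw [show n + 1 + (k + 1) + 1 = n + k + 1 + 1 + 1 by omega,
      show n + 1 + (k + 1) = n + k + 1 + 1 by omega, qbin_succ_succ q (n + k + 1 + 1) (k + 1)]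
    linear_combination ih₁ + q ^ (k + 1 + 1) * ih₂
      - q ^ (n + 1) * qbin_succ_succ q (n + k + 1) k - qbin_succ_succ q (n + k + 1) (k + 1)

theorem qbin_succ_succ' (n k : ℕ) :
    qbin q (n + 1) (k + 1) = q ^ (n - k) * qbin q n k + qbin q n (k + 1) := by
  rcases le_or_gt k n with hkn | hnk
  · obtain ⟨d, rfl⟩ := Nat.exists_eq_add_of_le' hkn
    simpa using qbin_add_succ_succ' q d k
  · rw [qbin_eq_zero_of_lt q (by omega), qbin_eq_zero_of_lt q hnk,
      qbin_eq_zero_of_lt q (by omega)]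
    ring

def qVandermondeTerm (A m ℓ k : ℕ) : R :=
  qbin q A k * (if k ≤ m then qbin q (m + ℓ) (m - k) else 0) * q ^ (k * (k + ℓ))

theorem qVandermondeTerm_succ_succ {A j : ℕ} (hj : j ≤ A) (m ℓ : ℕ) :
    qVandermondeTerm q (A + 1) (m + 1) ℓ (j + 1) =
      q ^ (A + ℓ + 1) * qVandermondeTerm q A m (ℓ + 1) j +
        qVandermondeTerm q A (m + 1) ℓ (j + 1) := by
  have hpow : q ^ (A - j) * q ^ ((j + 1) * (j + 1 + ℓ)) =
      q ^ (A + ℓ + 1) * q ^ (j * (j + (ℓ + 1))) := by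
    obtain ⟨d, rfl⟩ := Nat.exists_eq_add_of_le hj
    rw [← pow_add, ← pow_add, Nat.add_sub_cancel_left]
    ring_nf
  simp only [qVandermondeTerm, qbin_succ_succ', Nat.add_le_add_iff_right, Nat.add_sub_add_right,
    show m + 1 + ℓ = m + (ℓ + 1) by omega]
  linear_combination (qbin q A j * (if j ≤ m then qbin q (m + (ℓ + 1)) (m - j) else 0)) * hpow

theorem qbin_add_eq_sum : ∀ A m ℓ : ℕ,
    qbin q (A + (m + ℓ)) m = ∑ k ∈ range (A + 1), qVandermondeTerm q A m ℓ k
  | 0, m, ℓ => by simp [qVandermondeTerm, qbin_zero_right]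
  | A + 1, 0, ℓ => by
    rw [qbin_zero_right, sum_eq_single 0
      (fun k _ hk => by rw [qVandermondeTerm, if_neg (by omega)]; ring) (by simp)]
    simp [qVandermondeTerm, qbin_zero_right]
  | A + 1, m + 1, ℓ => by
    have hfirst :
        qVandermondeTerm q (A + 1) (m + 1) ℓ 0 = qVandermondeTerm q A (m + 1) ℓ 0 := by
      simp only [qVandermondeTerm, qbin_zero_right]
    have hlast : qVandermondeTerm q A (m + 1) ℓ (A + 1) = 0 := by
      simp only [qVandermondeTerm, qbin_eq_zero_of_lt q (Nat.lt_succ_self A), zero_mul]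
    have hshift : ∑ k ∈ range (A + 1), qVandermondeTerm q A (m + 1) ℓ k =
        ∑ j ∈ range (A + 1), qVandermondeTerm q A (m + 1) ℓ (j + 1) +
          qVandermondeTerm q A (m + 1) ℓ 0 := by
      rw [← sum_range_succ' (qVandermondeTerm q A (m + 1) ℓ), sum_range_succ _ (A + 1), hlast,
        add_zero]
    rw [show A + 1 + (m + 1 + ℓ) = A + ℓ + 1 + m + 1 by omega, qbin_add_succ_succ',
      show A + ℓ + 1 + m = A + (m + (ℓ + 1)) by omega, qbin_add_eq_sum A m (ℓ + 1),
      show A + (m + (ℓ + 1)) = A + (m + 1 + ℓ) by omega, qbin_add_eq_sum A (m + 1) ℓ, hshift,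
      sum_range_succ' (qVandermondeTerm q (A + 1) (m + 1) ℓ), sum_congr rfl fun j hj =>
        qVandermondeTerm_succ_succ q (Nat.lt_succ_iff.mp (mem_range.mp hj)) m ℓ,
      sum_add_distrib, ← mul_sum, hfirst]
    ring

end

/-- The factor `qbinom(m+ℓ, m-k)_q` vanishes when `m - k < 0`, which is expressed by the
`if k ≤ m` guard (`m - k` truncates in `ℕ`). -/
theorem stmt17 (n m ℓ : ℕ) (h : ℓ ≤ n) :
    qbin (X : Polynomial ℤ) (n + m) m =
      ∑ k ∈ Finset.range (n - ℓ + 1),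
        qbin (X : Polynomial ℤ) (n - ℓ) k *
          (if k ≤ m then qbin (X : Polynomial ℤ) (m + ℓ) (m - k) else 0) *
          X ^ (k * (k + ℓ)) := by
  rw [← show n - ℓ + (m + ℓ) = n + m by omega]
  exact qbin_add_eq_sum X (n - ℓ) m ℓ
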